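/- arXiv:2408.01420 — 3 statements merged into one kernel-verified Lean document; each statement's English description precedes it below -/
import Mathlib

section
/- Iterated integral identity: for p ∈ (0,1) and integers 1 ≤ n₀ < n, the Lebesgue volume of {x ∈ ℝ^{n-1} : x_i ≥ 0, Σ_{i=1}^{n-1} x_i ≤ 1, Σ_{i=1}^{n₀} x_i ≤ p} equals (1/(n-1)!)[1 - (1-p)^{n-1}] - Σ_{j=1}^{n₀-1} (1-p)^{n-1-j} p^j / (j! (n-1-j)!). -/
/-!
Fixing the first coordinate `t` of a point of
`{x ∈ ℝᵐ | x ≥ 0, x₀ + ⋯ + x_{m-1} ≤ b, x₀ + ⋯ + x_{k-1} ≤ p}` leaves a set of the same shape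
in dimension `m - 1`, with `k, p, b` replaced by `k - 1, p - t, b - t`, and `t` ranges over
`[0, p]`. Integrating `(p - t)ʲ (b - p)^{m-1-j} / (j! (m-1-j)!)` over `t ∈ [0, p]` gives the
next term `p^{j+1} (b - p)^{m-1-j} / ((j+1)! (m-1-j)!)`, so by induction on `m` the volume is
`∑_{j=k}^{m} pʲ (b - p)^{m-j} / (j! (m-j)!)`. For `k = 0` this is the plain simplex of volume
`bᵐ / m!`, which is the full binomial sum. With `b = 1`, the theorem is the binomial theorem
with the terms `j < k` removed.
-/

open MeasureTheory Finset
open scoped Nat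

def truncatedCornerSimplex (m k : ℕ) (p b : ℝ) : Set (Fin m → ℝ) :=
  {x | (∀ i, 0 ≤ x i) ∧ (∑ i, x i ≤ b) ∧
    (∑ i ∈ Finset.univ.filter (fun i : Fin m => (i : ℕ) < k), x i ≤ p)}

noncomputable def cornerTerm (m j : ℕ) (p q : ℝ) : ℝ :=
  q ^ (m - j) * p ^ j / (j ! * (m - j)!)

theorem cornerTerm_nonneg (m j : ℕ) {p q : ℝ} (hp : 0 ≤ p) (hq : 0 ≤ q) :
    0 ≤ cornerTerm m j p q := by
  unfold cornerTerm
  positivity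

theorem continuous_cornerTerm (m j : ℕ) (q : ℝ) : Continuous fun p => cornerTerm m j p q := by
  unfold cornerTerm
  fun_prop

theorem measurableSet_truncatedCornerSimplex (m k : ℕ) (p b : ℝ) :
    MeasurableSet (truncatedCornerSimplex m k p b) := by
  unfold truncatedCornerSimplex
  measurability

theorem truncatedCornerSimplex_eq_empty {m k : ℕ} {p : ℝ} (hp : p < 0) (b : ℝ) :
    truncatedCornerSimplex m k p b = ∅ :=
  Set.eq_empty_of_forall_notMem fun _ ⟨hx, _, hpx⟩ =>
    (hpx.trans_lt hp).not_ge (Finset.sum_nonneg fun i _ => hx i)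

theorem truncatedCornerSimplex_zero (m : ℕ) {p : ℝ} (hp : 0 ≤ p) (b : ℝ) :
    truncatedCornerSimplex m 0 p b = truncatedCornerSimplex m m b b := by
  ext x
  simp [truncatedCornerSimplex, hp]

theorem cons_mem_truncatedCornerSimplex_succ {m k : ℕ} {p b t : ℝ} {y : Fin m → ℝ} :
    (Fin.cons t y : Fin (m + 1) → ℝ) ∈ truncatedCornerSimplex (m + 1) (k + 1) p b ↔
      0 ≤ t ∧ y ∈ truncatedCornerSimplex m k (p - t) (b - t) := by
  simp only [truncatedCornerSimplex, Set.mem_ofPred_eq, Fin.forall_fin_succ, Fin.sum_univ_succ,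
    Finset.sum_filter, Fin.cons_zero, Fin.cons_succ, Fin.val_zero, Fin.val_succ]
  simp only [Nat.succ_pos, if_true, Nat.add_lt_add_iff_right, le_sub_iff_add_le', and_assoc]

theorem volume_eq_lintegral_volume_cons {α : Type*} [MeasureSpace α]
    [SigmaFinite (volume : Measure α)] {m : ℕ} {s : Set (Fin (m + 1) → α)}
    (hs : MeasurableSet s) :
    volume s = ∫⁻ t, volume {y : Fin m → α | Fin.cons t y ∈ s} := by
  have e := volume_preserving_piFinSuccAbove (fun _ : Fin (m + 1) => α) 0
  rw [← e.symm.measure_preimage hs.nullMeasurableSet, Measure.volume_eq_prod,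
    Measure.prod_apply (hs.preimage (MeasurableEquiv.measurable _))]
  simp only [MeasurableEquiv.piFinSuccAbove_symm_apply, Fin.insertNthEquiv_zero]
  rfl

theorem lintegral_indicator_Icc_ofReal {g : ℝ → ℝ} {a b : ℝ} (hab : a ≤ b)
    (hg : ContinuousOn g (Set.Icc a b)) (hg₀ : ∀ t ∈ Set.Icc a b, 0 ≤ g t) :
    ∫⁻ t, (Set.Icc a b).indicator (fun t => ENNReal.ofReal (g t)) t =
      ENNReal.ofReal (∫ t in a..b, g t) := by
  rw [lintegral_indicator measurableSet_Icc, intervalIntegral.integral_of_le hab,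
    ← integral_Icc_eq_integral_Ioc, ofReal_integral_eq_lintegral_ofReal
      (hg.integrableOn_Icc) ((ae_restrict_iff' measurableSet_Icc).2 (.of_forall hg₀))]

theorem integral_cornerTerm_sub (m j : ℕ) (p q : ℝ) :
    ∫ t in 0..p, cornerTerm m j (p - t) q = cornerTerm (m + 1) (j + 1) p q := by
  simp only [cornerTerm, div_eq_mul_inv, mul_comm (q ^ _), mul_assoc]
  rw [intervalIntegral.integral_mul_const, intervalIntegral.integral_comp_sub_left (· ^ j) p]
  simp [integral_pow, Nat.factorial_succ]
  field_simp

theorem sum_cornerTerm_eq_add_pow (m : ℕ) (p q : ℝ) :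
    ∑ j ∈ Icc 0 m, cornerTerm m j p q = (p + q) ^ m / m ! := by
  rw [add_pow, ← Nat.range_succ_eq_Icc_zero, Finset.sum_div]
  refine Finset.sum_congr rfl fun j hj => ?_
  rw [cornerTerm, Nat.cast_choose ℝ (Nat.lt_succ_iff.1 (Finset.mem_range.1 hj))]
  field_simp

theorem volume_truncatedCornerSimplex_succ_succ {m k : ℕ}
    (ih : ∀ p b : ℝ, 0 ≤ p → p ≤ b → volume (truncatedCornerSimplex m k p b) =
      ENNReal.ofReal (∑ j ∈ Icc k m, cornerTerm m j p (b - p)))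
    {p b : ℝ} (hp : 0 ≤ p) (hpb : p ≤ b) :
    volume (truncatedCornerSimplex (m + 1) (k + 1) p b) =
      ENNReal.ofReal (∑ j ∈ Icc (k + 1) (m + 1), cornerTerm (m + 1) j p (b - p)) := by
  have slice (t : ℝ) :
      volume {y | (Fin.cons t y : Fin (m + 1) → ℝ) ∈ truncatedCornerSimplex (m + 1) (k + 1) p b} =
        (Set.Icc 0 p).indicator
          (fun t => ENNReal.ofReal (∑ j ∈ Icc k m, cornerTerm m j (p - t) (b - p))) t := by
    simp_rw [cons_mem_truncatedCornerSimplex_succ]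
    by_cases ht : t ∈ Set.Icc 0 p
    · rw [Set.indicator_of_mem ht, ← sub_sub_sub_cancel_right b p t,
        ← ih _ _ (sub_nonneg.2 ht.2) (by linarith)]
      simp [ht.1]
    · rw [Set.indicator_of_notMem ht]
      rcases not_and_or.1 ht with ht | ht
      · simp [ht]
      · simp [truncatedCornerSimplex_eq_empty (sub_neg.2 (not_le.1 ht))]
  have hcont (j : ℕ) : Continuous fun t => cornerTerm m j (p - t) (b - p) :=
    (continuous_cornerTerm m j _).comp (continuous_sub_left p)
  rw [volume_eq_lintegral_volume_cons (measurableSet_truncatedCornerSimplex _ _ _ _),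
    lintegral_congr slice, lintegral_indicator_Icc_ofReal hp
      (continuous_finsetSum _ fun j _ => hcont j).continuousOn fun t ht =>
        Finset.sum_nonneg fun j _ => cornerTerm_nonneg m j (sub_nonneg.2 ht.2) (sub_nonneg.2 hpb),
    intervalIntegral.integral_finsetSum fun j _ => (hcont j).intervalIntegrable _ _]
  simp_rw [integral_cornerTerm_sub, ← map_add_right_Icc, sum_map]
  rfl

theorem volume_truncatedCornerSimplex {m k : ℕ} (hk : k ≤ m) {p b : ℝ} (hp : 0 ≤ p)
    (hpb : p ≤ b) :
    volume (truncatedCornerSimplex m k p b) =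
      ENNReal.ofReal (∑ j ∈ Icc k m, cornerTerm m j p (b - p)) := by
  induction m generalizing k p b with
  | zero =>
    obtain rfl : k = 0 := by omega
    have huniv : truncatedCornerSimplex 0 0 p b = Set.univ := by
      ext x
      simp [truncatedCornerSimplex, hp, hp.trans hpb]
    simp [huniv, volume_pi, cornerTerm]
  | succ m ih =>
    cases k with
    | zero =>
      have hsimplex : ∑ j ∈ Icc (m + 1) (m + 1), cornerTerm (m + 1) j b (b - b) =
          ∑ j ∈ Icc 0 (m + 1), cornerTerm (m + 1) j p (b - p) := by
        rw [sum_cornerTerm_eq_add_pow, add_sub_cancel]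
        simp [cornerTerm]
      rw [truncatedCornerSimplex_zero _ hp, ← hsimplex]
      exact volume_truncatedCornerSimplex_succ_succ (fun _ _ => ih le_rfl) (hp.trans hpb) le_rfl
    | succ k =>
      exact volume_truncatedCornerSimplex_succ_succ (fun _ _ => ih (by omega)) hp hpb

theorem sum_Icc_cornerTerm_eq_sub {m k : ℕ} (hk : 1 ≤ k) (hkm : k ≤ m + 1) (p q : ℝ) :
    ∑ j ∈ Icc k m, cornerTerm m j p q =
      ((p + q) ^ m - q ^ m) / (m ! : ℝ) - ∑ j ∈ Icc 1 (k - 1), cornerTerm m j p q := by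
  have hsplit : Icc 0 m = insert 0 (Icc 1 (k - 1) ∪ Icc k m) := by
    ext j
    simp only [Finset.mem_Icc, Finset.mem_insert, Finset.mem_union]
    omega
  have hdisj : Disjoint (Icc 1 (k - 1)) (Icc k m) :=
    Finset.disjoint_left.2 fun j hj hj' => by simp only [Finset.mem_Icc] at hj hj'; omega
  have hzero : cornerTerm m 0 p q = q ^ m / m ! := by simp [cornerTerm]
  have hbinom := sum_cornerTerm_eq_add_pow m p q
  rw [hsplit, sum_insert (by simp; omega), sum_union hdisj, hzero] at hbinom
  rw [sub_div, ← hbinom]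
  ring

/-- Iterated integral identity: for `p ∈ (0,1)` and integers `1 ≤ n₀ < n`, the Lebesgue volume of
`{x ∈ ℝ^{n-1} : x i ≥ 0, ∑_{i=1}^{n-1} x i ≤ 1, ∑_{i=1}^{n₀} x i ≤ p}` equals
`(1/(n-1)!)(1 - (1-p)^{n-1}) - ∑_{j=1}^{n₀-1} (1-p)^{n-1-j} p^j / (j! (n-1-j)!)`. -/
theorem volume_truncated_corner_simplex (n n₀ : ℕ) (hn₀ : 1 ≤ n₀) (hn : n₀ < n)
    (p : ℝ) (hp : 0 < p) (hp1 : p < 1) :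
    volume ({x : EuclideanSpace ℝ (Fin (n - 1)) |
        (∀ i, 0 ≤ x i) ∧ (∑ i, x i ≤ 1) ∧
        (∑ i ∈ Finset.univ.filter (fun i : Fin (n - 1) => (i : ℕ) < n₀), x i ≤ p)}) =
      ENNReal.ofReal
        ((1 / Nat.factorial (n - 1)) * (1 - (1 - p) ^ (n - 1)) -
          ∑ j ∈ Finset.Icc 1 (n₀ - 1),
            (1 - p) ^ (n - 1 - j) * p ^ j /
              (Nat.factorial j * Nat.factorial (n - 1 - j))) := by
  have hset : {x : EuclideanSpace ℝ (Fin (n - 1)) |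
        (∀ i, 0 ≤ x i) ∧ (∑ i, x i ≤ 1) ∧
        (∑ i ∈ Finset.univ.filter (fun i : Fin (n - 1) => (i : ℕ) < n₀), x i ≤ p)} =
      (MeasurableEquiv.toLp 2 (Fin (n - 1) → ℝ)).symm ⁻¹' truncatedCornerSimplex (n - 1) n₀ p 1 :=
    rfl
  rw [hset, (EuclideanSpace.volume_preserving_symm_measurableEquiv_toLp _).measure_preimage_equiv,
    volume_truncatedCornerSimplex (by omega) hp.le hp1.le,
    sum_Icc_cornerTerm_eq_sub hn₀ (by omega), add_sub_cancel, one_pow, one_div_mul_eq_div]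
  rfl
end

section
/- Multivariate Hoeffding-type bound: if f : 𝒳^n → ℝ has the bounded difference property with constants c_1, …, c_n, and X_1, …, X_n are independent 𝒳-valued random variables, then with Z = f(X_1,…,X_n), for every λ ∈ ℝ, E[exp(λ(E[Z] - Z))] ≤ exp(λ² Σ_{i=1}^n c_i² / 8). -/
/-!
Induct on the number of coordinates. Let `G a` be the mean of `f (a, ·)` over the remaining
coordinates and `M` the mean of `f`. Splitting `λ (M - f (a, y))` as
`λ (M - G a) + λ (G a - f (a, y))` and integrating first in `y`, the induction hypothesis for
`f (a, ·)` bounds the inner factor by `exp (λ² ∑_{i ≥ 2} c_i² / 8)` uniformly in `a`, while `G`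
has oscillation at most `c_1`, so Hoeffding's lemma bounds the outer factor by
`exp (λ² c_1² / 8)`. Independence identifies the law of `(X_1, …, X_n)` with the product of the
marginals, where this computation takes place.
-/

open MeasureTheory ProbabilityTheory

section Oscillation

open Real Set

variable {α : Type*}

lemma exists_forall_mem_Icc_of_abs_sub_le [Nonempty α] {Y : α → ℝ} {c : ℝ}
    (h : ∀ x x', |Y x - Y x'| ≤ c) : ∃ a, ∀ x, Y x ∈ Icc a (a + c) := by
  have hbdd : BddBelow (range Y) := by
    obtain ⟨x₀⟩ := ‹Nonempty α›
    refine ⟨Y x₀ - c, ?_⟩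
    rintro _ ⟨x, rfl⟩
    linarith [(abs_le.1 (h x₀ x)).2]
  refine ⟨⨅ x, Y x, fun x => ⟨ciInf_le hbdd x, ?_⟩⟩
  have : Y x - c ≤ ⨅ x', Y x' := le_ciInf fun x' => by linarith [(abs_le.1 (h x x')).2]
  linarith

variable [MeasurableSpace α] {μ : Measure α} [IsProbabilityMeasure μ] {Y : α → ℝ} {c : ℝ}

lemma integrable_of_abs_sub_le (hY : AEMeasurable Y μ) (h : ∀ x x', |Y x - Y x'| ≤ c) :
    Integrable Y μ := by
  have := nonempty_of_isProbabilityMeasure μ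
  obtain ⟨a, ha⟩ := exists_forall_mem_Icc_of_abs_sub_le h
  exact .of_mem_Icc a (a + c) hY (ae_of_all _ ha)

lemma integrable_exp_mul_sub_of_abs_sub_le (hY : AEMeasurable Y μ)
    (h : ∀ x x', |Y x - Y x'| ≤ c) (t m : ℝ) :
    Integrable (fun x => exp (t * (m - Y x))) μ := by
  have := nonempty_of_isProbabilityMeasure μ
  obtain ⟨a, ha⟩ := exists_forall_mem_Icc_of_abs_sub_le h
  refine integrable_exp_mul_of_mem_Icc (a := m - (a + c)) (b := m - a) (by fun_prop)
    (ae_of_all _ fun x => ?_)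
  obtain ⟨h₁, h₂⟩ := ha x
  constructor <;> linarith

lemma abs_integral_sub_integral_le {g g' : α → ℝ} (hg : Integrable g μ) (hg' : Integrable g' μ)
    (h : ∀ x, |g x - g' x| ≤ c) : |∫ x, g x ∂μ - ∫ x, g' x ∂μ| ≤ c := by
  rw [← integral_sub hg hg']
  simpa using norm_integral_le_of_norm_le_const (μ := μ)
    (ae_of_all _ fun x => (Real.norm_eq_abs _).trans_le (h x))

lemma integral_exp_mul_integral_sub_le (hY : AEMeasurable Y μ)
    (h : ∀ x x', |Y x - Y x'| ≤ c) (t : ℝ) :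
    ∫ x, exp (t * (μ[Y] - Y x)) ∂μ ≤ exp (t ^ 2 * c ^ 2 / 8) := by
  have := nonempty_of_isProbabilityMeasure μ
  obtain ⟨a, ha⟩ := exists_forall_mem_Icc_of_abs_sub_le h
  calc ∫ x, exp (t * (μ[Y] - Y x)) ∂μ = mgf (fun x => Y x - μ[Y]) μ (-t) := by
        simp only [mgf, neg_mul_comm, neg_sub]
    _ ≤ _ := (hasSubgaussianMGF_of_mem_Icc hY (ae_of_all _ ha)).mgf_le (-t)
    _ = exp (t ^ 2 * c ^ 2 / 8) := by
        simp only [add_sub_cancel_left, NNReal.coe_pow, NNReal.coe_div, coe_nnnorm, norm_eq_abs,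
          div_pow, sq_abs, neg_sq, NNReal.coe_ofNat]
        ring_nf

variable {β : Type*} [MeasurableSpace β] {ν : Measure β} [IsProbabilityMeasure ν]

lemma integral_exp_mul_integral_sub_prod_le {F : α × β → ℝ} (hF : Measurable F) {C K t : ℝ}
    (hosc : ∀ z z', |F z - F z'| ≤ C) (hfst : ∀ a a' y, |F (a, y) - F (a', y)| ≤ c)
    (hsnd : ∀ a, ∫ y, exp (t * ((∫ y', F (a, y') ∂ν) - F (a, y))) ∂ν ≤ K) :
    ∫ z, exp (t * ((∫ z', F z' ∂μ.prod ν) - F z)) ∂μ.prod ν ≤ exp (t ^ 2 * c ^ 2 / 8) * K := by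
  set M := ∫ z, F z ∂μ.prod ν
  set G : α → ℝ := fun a => ∫ y, F (a, y) ∂ν
  have hslice_int (a : α) : Integrable (fun y => F (a, y)) ν :=
    integrable_of_abs_sub_le (by fun_prop) fun _ _ => hosc _ _
  have hGm : Measurable G := hF.stronglyMeasurable.integral_prod_right'.measurable
  have hG (a a' : α) : |G a - G a'| ≤ c :=
    abs_integral_sub_integral_le (hslice_int a) (hslice_int a') (hfst a a')
  have hK : 0 ≤ K := (integral_nonneg fun _ => (exp_pos _).le).trans
    (hsnd (nonempty_of_isProbabilityMeasure μ).some)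
  have hM : M = ∫ a, G a ∂μ := integral_prod F (integrable_of_abs_sub_le hF.aemeasurable hosc)
  have hinner (a : α) : ∫ y, exp (t * (M - F (a, y))) ∂ν ≤ exp (t * (M - G a)) * K :=
    calc ∫ y, exp (t * (M - F (a, y))) ∂ν
        = exp (t * (M - G a)) * ∫ y, exp (t * (G a - F (a, y))) ∂ν := by
          rw [← integral_const_mul]
          congr with y
          rw [← exp_add]
          ring_nf
      _ ≤ exp (t * (M - G a)) * K := by gcongr; exact hsnd a
  calc ∫ z, exp (t * (M - F z)) ∂μ.prod ν
      = ∫ a, ∫ y, exp (t * (M - F (a, y))) ∂ν ∂μ :=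
        integral_prod _ (integrable_exp_mul_sub_of_abs_sub_le hF.aemeasurable hosc t M)
    _ ≤ ∫ a, exp (t * (M - G a)) * K ∂μ :=
        integral_mono_of_nonneg (ae_of_all _ fun a => integral_nonneg fun y => (exp_pos _).le)
          ((integrable_exp_mul_sub_of_abs_sub_le hGm.aemeasurable hG t M).mul_const K)
          (ae_of_all _ hinner)
    _ = (∫ a, exp (t * (M - G a)) ∂μ) * K := integral_mul_const _ _
    _ ≤ exp (t ^ 2 * c ^ 2 / 8) * K := by
        gcongr
        rw [hM]
        exact integral_exp_mul_integral_sub_le hGm.aemeasurable hG t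

end Oscillation

def HasBoundedDifferences {ι 𝒳 : Type*} (f : (ι → 𝒳) → ℝ) (c : ι → ℝ) : Prop :=
  ∀ i (x x' : ι → 𝒳), (∀ j, j ≠ i → x j = x' j) → |f x - f x'| ≤ c i

namespace HasBoundedDifferences

variable {ι 𝒳 : Type*}

lemma abs_sub_le_sum {f : (ι → 𝒳) → ℝ} {c : ι → ℝ} (hf : HasBoundedDifferences f c)
    {s : Finset ι} {x x' : ι → 𝒳} (h : ∀ j ∉ s, x j = x' j) :
    |f x - f x'| ≤ ∑ i ∈ s, c i := by
  classical
  induction s using Finset.induction_on generalizing x with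
  | empty => simp [funext fun j => h j (Finset.notMem_empty j)]
  | insert i s hi ih =>
    set y := Function.update x i (x' i) with hy
    have hxy : |f x - f y| ≤ c i := hf i x y fun j hj => (Function.update_of_ne hj _ _).symm
    have hyx' : |f y - f x'| ≤ ∑ i ∈ s, c i := ih fun j hj => by
      by_cases hji : j = i
      · simp [y, hji]
      · rw [hy, Function.update_of_ne hji]
        exact h j (by simp [hji, hj])
    calc |f x - f x'| ≤ |f x - f y| + |f y - f x'| := abs_sub_le _ _ _
      _ ≤ c i + ∑ i ∈ s, c i := add_le_add hxy hyx'
      _ = ∑ i ∈ insert i s, c i := (Finset.sum_insert hi).symm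

lemma comp_cons {n : ℕ} {f : (Fin (n + 1) → 𝒳) → ℝ} {c : Fin (n + 1) → ℝ}
    (hf : HasBoundedDifferences f c) (a : 𝒳) :
    HasBoundedDifferences (fun y => f (Fin.cons a y)) (fun j => c j.succ) := by
  intro j y y' h
  refine hf j.succ _ _ fun i hi => ?_
  cases i using Fin.cases with
  | zero => rfl
  | succ k => exact h k (ne_of_apply_ne Fin.succ hi)

end HasBoundedDifferences

section FinCons

variable {𝒳 : Type*} [MeasurableSpace 𝒳] {n : ℕ}

lemma MeasurableEquiv.piFinSuccAbove_zero_symm_apply (z : 𝒳 × (Fin n → 𝒳)) :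
    (MeasurableEquiv.piFinSuccAbove (fun _ : Fin (n + 1) => 𝒳) 0).symm z = Fin.cons z.1 z.2 := by
  simp [MeasurableEquiv.piFinSuccAbove_symm_apply, Fin.insertNthEquiv, Fin.insertNth_zero']

lemma measurable_fin_cons :
    Measurable fun z : 𝒳 × (Fin n → 𝒳) => (Fin.cons z.1 z.2 : Fin (n + 1) → 𝒳) := by
  simpa only [← funext MeasurableEquiv.piFinSuccAbove_zero_symm_apply]
    using (MeasurableEquiv.piFinSuccAbove (fun _ : Fin (n + 1) => 𝒳) 0).symm.measurable

lemma integral_pi_fin_succ {E : Type*} [NormedAddCommGroup E] [NormedSpace ℝ E]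
    (ν : Fin (n + 1) → Measure 𝒳) [∀ i, SigmaFinite (ν i)] (F : (Fin (n + 1) → 𝒳) → E) :
    ∫ x, F x ∂Measure.pi ν =
      ∫ z, F (Fin.cons z.1 z.2) ∂(ν 0).prod (Measure.pi fun j => ν j.succ) := by
  rw [← (measurePreserving_piFinSuccAbove ν 0).symm.integral_comp']
  simp only [Fin.succAbove_zero, MeasurableEquiv.piFinSuccAbove_zero_symm_apply]

theorem HasBoundedDifferences.integral_exp_mul_integral_sub_pi_le
    (ν : Fin n → Measure 𝒳) [∀ i, IsProbabilityMeasure (ν i)] {f : (Fin n → 𝒳) → ℝ}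
    (hf : Measurable f) {c : Fin n → ℝ} (hbd : HasBoundedDifferences f c) (t : ℝ) :
    ∫ x, Real.exp (t * ((∫ x', f x' ∂Measure.pi ν) - f x)) ∂Measure.pi ν ≤
      Real.exp (t ^ 2 * (∑ i, c i ^ 2) / 8) := by
  induction n with
  | zero =>
    simpa using integral_exp_mul_integral_sub_le (c := 0) hf.aemeasurable
      (fun x x' => by simp [Subsingleton.elim x x']) t
  | succ n ih =>
    have hfcons := hf.comp measurable_fin_cons
    rw [integral_pi_fin_succ ν f, integral_pi_fin_succ ν]
    refine (integral_exp_mul_integral_sub_prod_le hfcons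
      (fun _ _ => hbd.abs_sub_le_sum (s := Finset.univ) (by simp))
      (fun a a' y => hbd 0 _ _ fun j hj => ?_)
      (fun a => ih _ (hfcons.comp measurable_prodMk_left) (hbd.comp_cons a))).trans_eq ?_
    · cases j using Fin.cases with
      | zero => exact absurd rfl hj
      | succ k => rfl
    · rw [← Real.exp_add, Fin.sum_univ_succ]
      ring_nf

end FinCons

/-- Multivariate Hoeffding-type bound: if `f : 𝒳^n → ℝ` has the bounded difference property with
constants `c i`, and `X 1, …, X n` are independent `𝒳`-valued random variables, then with
`Z = f (X 1, …, X n)`, for every `λ ∈ ℝ`,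
`E[exp(λ (E[Z] - Z))] ≤ exp(λ² ∑ c i ² / 8)`. -/
theorem multivariate_hoeffding {Ω 𝒳 : Type*} [MeasurableSpace Ω] [MeasurableSpace 𝒳]
    (μ : Measure Ω) [IsProbabilityMeasure μ] (n : ℕ)
    (f : (Fin n → 𝒳) → ℝ) (hf : Measurable f) (c : Fin n → ℝ)
    (hbd : ∀ (i : Fin n) (x x' : Fin n → 𝒳),
      (∀ j, j ≠ i → x j = x' j) → |f x - f x'| ≤ c i)
    (X : Fin n → Ω → 𝒳) (hXm : ∀ i, Measurable (X i))
    (hindep : iIndepFun X μ)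
    (Z : Ω → ℝ) (hZ : Z = fun ω => f (fun i => X i ω)) (l : ℝ) :
    ∫ ω, Real.exp (l * ((∫ ω', Z ω' ∂μ) - Z ω)) ∂μ ≤
      Real.exp (l ^ 2 * (∑ i, c i ^ 2) / 8) := by
  subst hZ
  have hlaw := hindep.map_fun_eq_pi_map fun i => (hXm i).aemeasurable
  have hpull (g : (Fin n → 𝒳) → ℝ) (hg : Measurable g) :
      ∫ ω, g (fun i => X i ω) ∂μ = ∫ x, g x ∂Measure.pi fun i => μ.map (X i) := by
    rw [← hlaw, integral_map (measurable_pi_lambda _ hXm).aemeasurable hg.aestronglyMeasurable]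
  beta_reduce
  rw [hpull f hf, hpull (fun x => Real.exp (l * (_ - f x))) (by fun_prop)]
  have (i : Fin n) := Measure.isProbabilityMeasure_map (μ := μ) (hXm i).aemeasurable
  exact HasBoundedDifferences.integral_exp_mul_integral_sub_pi_le _ hf hbd l
end

section
/- ε-expansion of the harmful zone under ℓ1: for p ∈ (0,1), ε ∈ (0, 2p), and 1 ≤ n₀ ≤ n, the set {x ∈ Δ^{n-1} : ∃ y ∈ Δ^{n-1} with Σ_{i=1}^{n₀} y_i ≥ p and ‖x - y‖_1 ≤ ε} equals {x ∈ Δ^{n-1} : Σ_{i=1}^{n₀} x_i ≥ p - ε/2}. -/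
/-- ε-expansion of the harmful zone under ℓ1: for `p ∈ (0,1)`, `ε ∈ (0, 2p)` and `1 ≤ n₀ ≤ n`,
the ℓ1 `ε`-expansion within the simplex of `{x ∈ Δ^{n-1} : ∑_{i<n₀} x i ≥ p}` equals
`{x ∈ Δ^{n-1} : ∑_{i<n₀} x i ≥ p - ε/2}`. -/
theorem eps_expansion_harmful_zone (n n₀ : ℕ) (hn₀ : 1 ≤ n₀) (hn : n₀ ≤ n)
    (p ε : ℝ) (hp0 : 0 < p) (hp1 : p < 1) (hε0 : 0 < ε) (hε : ε < 2 * p)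
    (Δ : Set (Fin n → ℝ)) (hΔ : Δ = {x | (∀ i, 0 ≤ x i) ∧ ∑ i, x i = 1}) :
    {x ∈ Δ | ∃ y ∈ Δ,
        p ≤ ∑ i ∈ Finset.univ.filter (fun i : Fin n => (i : ℕ) < n₀), y i ∧
        ∑ i, |x i - y i| ≤ ε} =
      {x ∈ Δ | p - ε / 2 ≤ ∑ i ∈ Finset.univ.filter (fun i : Fin n => (i : ℕ) < n₀), x i} := by
  subst hΔ
  set A := Finset.univ.filter (fun i : Fin n => (i : ℕ) < n₀) with hAdef
  set B := Finset.univ.filter (fun i : Fin n => ¬ (i : ℕ) < n₀) with hBdef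
  have hsplit : ∀ f : Fin n → ℝ, ∑ i ∈ A, f i + ∑ i ∈ B, f i = ∑ i, f i := fun f =>
    Finset.sum_filter_add_sum_filter_not _ _ _
  ext x
  simp only [Set.mem_setOf_eq]
  constructor
  · rintro ⟨hx, y, hy, hpy, hxy⟩
    refine ⟨hx, ?_⟩
    have hb1 : ∑ i ∈ A, y i - ∑ i ∈ A, x i ≤ ∑ i ∈ A, |x i - y i| := by
      rw [← Finset.sum_sub_distrib]
      apply Finset.sum_le_sum
      intro i _
      rw [abs_sub_comm]
      exact le_abs_self _
    have hb2 : ∑ i ∈ B, x i - ∑ i ∈ B, y i ≤ ∑ i ∈ B, |x i - y i| := by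
      rw [← Finset.sum_sub_distrib]
      exact Finset.sum_le_sum fun i _ => le_abs_self _
    have h1 := hsplit x
    have h2 := hsplit y
    have h3 := hsplit (fun i => |x i - y i|)
    rw [hx.2] at h1
    rw [hy.2] at h2
    linarith
  · rintro ⟨hx, hpx⟩
    refine ⟨hx, ?_⟩
    by_cases hcase : p ≤ ∑ i ∈ A, x i
    · exact ⟨x, hx, hcase, by simp [abs_of_nonneg]; linarith⟩
    push_neg at hcase
    set s := ∑ i ∈ A, x i with hs
    set t := ∑ i ∈ B, x i with ht
    have hst : s + t = 1 := by rw [hs, ht, hsplit, hx.2]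
    set δ := p - s with hδ
    have hδ0 : 0 < δ := by linarith
    have hδε : δ ≤ ε / 2 := by linarith
    have ht0 : 0 < t := by linarith
    have htδ : 0 ≤ t - δ := by linarith
    set c := (t - δ) / t with hc
    have hc0 : 0 ≤ c := div_nonneg htδ ht0.le
    have hc1 : c ≤ 1 := by rw [hc, div_le_one ht0]; linarith
    have hct : c * t = t - δ := by rw [hc]; field_simp
    have hnpos : 0 < n := lt_of_lt_of_le hn₀ hn
    set i₀ : Fin n := ⟨0, hnpos⟩ with hi₀
    have hi₀A : i₀ ∈ A := by simp [hAdef, hi₀]; omega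
    set y : Fin n → ℝ := fun i =>
      (if i = i₀ then δ else 0) + (if (i : ℕ) < n₀ then x i else c * x i) with hy
    have hymemA : ∀ i ∈ A, y i = (if i = i₀ then δ else 0) + x i := by
      intro i hi
      rw [hAdef, Finset.mem_filter] at hi
      simp [hy, hi.2]
    have hymemB : ∀ i ∈ B, y i = c * x i := by
      intro i hi
      rw [hBdef, Finset.mem_filter] at hi
      have hi0 : i ≠ i₀ := by
        intro h; apply hi.2; rw [h]; exact hn₀
      simp [hy, hi.2, hi0]
    have hyA : ∑ i ∈ A, y i = δ + s := by
      rw [Finset.sum_congr rfl hymemA, Finset.sum_add_distrib,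
        Finset.sum_ite_eq' A i₀ (fun _ => δ), if_pos hi₀A, hs]
    have hyB : ∑ i ∈ B, y i = c * t := by
      rw [Finset.sum_congr rfl hymemB, ← Finset.mul_sum, ht]
    have hysum : ∑ i, y i = 1 := by
      rw [← hsplit y, hyA, hyB, hct]; linarith
    have hynn : ∀ i, 0 ≤ y i := by
      intro i
      rw [hy]
      apply add_nonneg
      · split <;> [exact hδ0.le; exact le_refl 0]
      · split
        · exact hx.1 i
        · exact mul_nonneg hc0 (hx.1 i)
    refine ⟨y, ⟨hynn, hysum⟩, by rw [hyA]; linarith, ?_⟩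
    have hA1 : ∀ i ∈ A, |x i - y i| = (if i = i₀ then δ else 0) := by
      intro i hi
      rw [hymemA i hi]
      rcases eq_or_ne i i₀ with h | h
      · subst h
        rw [if_pos rfl, show x i₀ - (δ + x i₀) = -δ by ring, abs_neg,
          abs_of_nonneg hδ0.le]
      · simp [h]
    have habsA : ∑ i ∈ A, |x i - y i| = δ := by
      rw [Finset.sum_congr rfl hA1, Finset.sum_ite_eq' A i₀ (fun _ => δ), if_pos hi₀A]
    have hB1 : ∀ i ∈ B, |x i - y i| = (1 - c) * x i := by
      intro i hi
      rw [hymemB i hi, show x i - c * x i = (1 - c) * x i by ring,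
        abs_of_nonneg (mul_nonneg (by linarith) (hx.1 i))]
    have habsB : ∑ i ∈ B, |x i - y i| = (1 - c) * t := by
      rw [Finset.sum_congr rfl hB1, ← Finset.mul_sum, ht]
    rw [← hsplit (fun i => |x i - y i|), habsA, habsB]
    have : (1 - c) * t = δ := by rw [mul_comm, mul_sub, mul_one, mul_comm, hct]; ring
    linarith
end
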